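/- Let m ≥ 2 and i with c_m − g_m < i ≤ 2c_m − g_m − 2 and q | (i + 1 + g_m). Then ν^m_{i+1} ≥ ν^m_{i+2}; consequently the order bound δ^m_i := min{ν^m_j : j > i} satisfies δ^m_i = ν^m_{i+2} in this case. -/

import Mathlib

/-- The Garcia–Stichtenoth tower of Weierstrass semigroups:
`Λ¹ = ℕ₀`, `Λᵐ = q·Λ^{m-1} ∪ {i : i ≥ qᵐ - q^⌊(m+1)/2⌋}` for `m ≥ 2`. -/
def GSsemigroup (q : ℕ) : ℕ → Set ℕ
  | 0 => Set.univ
  | 1 => Set.univ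
  | (m + 2) => (fun x => q * x) '' GSsemigroup q (m + 1) ∪
      {i : ℕ | q ^ (m + 2) - q ^ ((m + 3) / 2) ≤ i}

/-- `c_m = q^m - q^⌊(m+1)/2⌋`, the conductor of `Λ^m`. -/
def gsC (q m : ℕ) : ℕ := q ^ m - q ^ ((m + 1) / 2)

/-- `g_m = (q^⌊(m+1)/2⌋ - 1)(q^⌈(m-1)/2⌉ - 1)`, the genus of `Λ^m`
(note `⌈(m-1)/2⌉ = ⌊m/2⌋` for `m ≥ 1`). -/
def gsG (q m : ℕ) : ℕ := (q ^ ((m + 1) / 2) - 1) * (q ^ (m / 2) - 1)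

/-- `A_i = {j : q^{2i-1} - q^i ≤ j ≤ q^{2i-1} - q^{i-1} - 1}`. -/
def gsA (q i : ℕ) : Set ℕ :=
  {j : ℕ | q ^ (2 * i - 1) - q ^ i ≤ j ∧ j ≤ q ^ (2 * i - 1) - q ^ (i - 1) - 1}

/-- The enumeration `λ` of `Λ^m`: the increasing bijection `ℕ₀ → Λ^m`. -/
noncomputable def gsEnum (q m : ℕ) : ℕ → ℕ := Nat.nth (fun n => n ∈ GSsemigroup q m)

/-- `ν_i = #{j : λ_i - λ_j ∈ Λ^m}` (the subtraction being in `ℤ`,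
i.e. `∃ a ∈ Λ^m, λ_j + a = λ_i`). -/
noncomputable def gsNu (q m i : ℕ) : ℕ :=
  Set.ncard {j : ℕ | ∃ a ∈ GSsemigroup q m, gsEnum q m j + a = gsEnum q m i}

/-- The order (Feng–Rao) bound `δ_i = min {ν_j : j > i}`. -/
noncomputable def gsDelta (q m i : ℕ) : ℕ := sInf (gsNu q m '' {j : ℕ | i < j})

/-- The semigroup floor `⌊k⌋_{Λ^m}`: the largest element of `Λ^m` not exceeding `k`. -/
noncomputable def gsFloor (q m k : ℕ) : ℕ := sSup {x ∈ GSsemigroup q m | x ≤ k}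

/-- `λ⁻¹(x)` for `x ∈ Λ^m`: the number of elements of `Λ^m` below `x`. -/
noncomputable def gsLinv (q m x : ℕ) : ℕ := Set.ncard {y ∈ GSsemigroup q m | y < x}

/-!
Put `x = λ_{i+2} = i + 2 + g_m`. The hypotheses give `x < 2c_m` and `q ∤ x`, while `q` divides
`c_m` and every element of `Λ^m` below `c_m`. So in a decomposition `x = y + a` with
`y, a ∈ Λ^m`, either `y < c_m < a` or `c_m < y`. Shifting the summand above `c_m` by
`λ_J - x ≥ -1` keeps it in `Λ^m` and injects the decompositions of `x` into those of `λ_J`;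
hence `ν_{i+2} ≤ ν_J` for every `J > i`, which gives both claims.
-/

open Set

/-- The divisors of `x` in `S`; `ν^m_i` is their number for `S = Λ^m`, `x = λ_i`. -/
def semigroupDivisors (S : Set ℕ) (x : ℕ) : Set ℕ := {y ∈ S | ∃ a ∈ S, y + a = x}

theorem semigroupDivisors_finite (S : Set ℕ) (x : ℕ) : (semigroupDivisors S x).Finite :=
  (finite_Iic x).subset fun _ ⟨_, _, _, h⟩ => by rw [mem_Iic]; omega

theorem ncard_setOf_nth_add_mem {S : Set ℕ} (hS : S.Infinite) (x : ℕ) :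
    {j | ∃ a ∈ S, Nat.nth (· ∈ S) j + a = x}.ncard = (semigroupDivisors S x).ncard := by
  have hpre : {j | ∃ a ∈ S, Nat.nth (· ∈ S) j + a = x} =
      Nat.nth (· ∈ S) ⁻¹' semigroupDivisors S x :=
    ext fun j => (and_iff_right (Nat.nth_mem_of_infinite hS j)).symm
  have hrange : semigroupDivisors S x ⊆ range (Nat.nth (· ∈ S)) := by
    rw [Nat.range_nth_of_infinite (p := (· ∈ S)) hS]
    exact fun y hy => hy.1
  rw [hpre]
  exact ncard_preimage_of_injective_subset_range (Nat.nth_injective hS) hrange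

section Divisors

variable {S : Set ℕ} {q c x : ℕ}

theorem lt_or_lt_of_mem_semigroupDivisors (hS : ∀ n ∈ S, n < c → q ∣ n) (hc : q ∣ c)
    (hx : x < 2 * c) (hqx : ¬ q ∣ x) {y : ℕ} (hy : y ∈ semigroupDivisors S x) :
    (y < c ∧ ∃ a ∈ S, c < a ∧ y + a = x) ∨ c < y := by
  obtain ⟨hyS, a, haS, rfl⟩ := hy
  by_cases hyc : y < c
  · have hqa : ¬ q ∣ a := fun ha => hqx (dvd_add (hS y hyS hyc) ha)
    have hca : c ≤ a := not_lt.1 fun h => hqa (hS a haS h)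
    exact .inl ⟨hyc, a, haS, lt_of_le_of_ne hca fun h => hqa (h ▸ hc), rfl⟩
  · refine .inr (lt_of_le_of_ne (not_lt.1 hyc) fun h => hqx ?_)
    subst h
    exact dvd_add hc (hS a haS (by omega))

theorem ncard_semigroupDivisors_le_of_not_dvd (hS : ∀ n, c ≤ n → n ∈ S)
    (hS' : ∀ n ∈ S, n < c → q ∣ n) (hc : q ∣ c) (hx : x < 2 * c) (hqx : ¬ q ∣ x) {x' : ℕ}
    (hx' : x ≤ x' + 1) :
    (semigroupDivisors S x).ncard ≤ (semigroupDivisors S x').ncard := by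
  have hsplit := fun y (hy : y ∈ semigroupDivisors S x) =>
    lt_or_lt_of_mem_semigroupDivisors hS' hc hx hqx hy
  refine ncard_le_ncard_of_injOn (fun y => if y < c then y else y + x' - x) ?_ ?_
    (semigroupDivisors_finite S x')
  · intro y hy
    rcases hsplit y hy with ⟨hyc, a, -, hca, rfl⟩ | hcy
    · simp only [if_pos hyc]
      exact ⟨hy.1, a + x' - (y + a), hS _ (by omega), by omega⟩
    · obtain ⟨-, a, haS, rfl⟩ := hy
      simp only [if_neg (show ¬ y < c by omega)]
      exact ⟨hS _ (by omega), a, haS, by omega⟩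
  · intro y hy z hz h
    have hy' := (hsplit y hy).imp_left And.left
    have hz' := (hsplit z hz).imp_left And.left
    dsimp only at h
    split_ifs at h <;> omega

end Divisors

theorem Nat.count_eq_add_sub_of_forall_le (p : ℕ → Prop) [DecidablePred p] {a b : ℕ}
    (hab : a ≤ b) (h : ∀ n, a ≤ n → p n) : Nat.count p b = Nat.count p a + (b - a) := by
  obtain ⟨k, rfl⟩ := Nat.exists_eq_add_of_le hab
  rw [Nat.count_add, Nat.count_of_forall fun n _ => h (a + n) (Nat.le_add_right a n),
    Nat.add_sub_cancel_left]

open Classical in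
theorem Nat.count_mem_image_mul {q : ℕ} (A : Set ℕ) (hq : 0 < q) (D : ℕ) :
    Nat.count (· ∈ (q * ·) '' A) (q * D) = Nat.count (· ∈ A) D := by
  rw [Nat.count_eq_card_filter_range, Nat.count_eq_card_filter_range,
    ← Finset.card_image_of_injective {j ∈ Finset.range D | j ∈ A}
      (mul_right_injective₀ hq.ne')]
  congr 1
  ext n
  simp only [Finset.mem_filter, Finset.mem_range, Finset.mem_image, mem_image]
  constructor
  · rintro ⟨hn, j, hj, rfl⟩
    exact ⟨j, ⟨Nat.lt_of_mul_lt_mul_left hn, hj⟩, rfl⟩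
  · rintro ⟨j, ⟨hjD, hj⟩, rfl⟩
    exact ⟨Nat.mul_lt_mul_of_pos_left hjD hq, j, hj, rfl⟩

section GarciaStichtenoth

variable {q m : ℕ}

theorem GSsemigroup_add_two (q m : ℕ) :
    GSsemigroup q (m + 2) = (q * ·) '' GSsemigroup q (m + 1) ∪ Ici (gsC q (m + 2)) :=
  rfl

theorem mem_GSsemigroup_of_gsC_le (hm : 2 ≤ m) {n : ℕ} (h : gsC q m ≤ n) :
    n ∈ GSsemigroup q m := by
  obtain ⟨m, rfl⟩ := Nat.exists_eq_add_of_le' hm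
  exact .inr h

theorem dvd_of_mem_GSsemigroup_of_lt_gsC (hm : 2 ≤ m) {n : ℕ} (hn : n ∈ GSsemigroup q m)
    (h : n < gsC q m) : q ∣ n := by
  obtain ⟨m, rfl⟩ := Nat.exists_eq_add_of_le' hm
  rcases hn with ⟨j, -, rfl⟩ | hn
  · exact dvd_mul_right q j
  · exact absurd hn (not_le.2 h)

theorem GSsemigroup_infinite (hm : 2 ≤ m) : (GSsemigroup q m).Infinite :=
  (Ici_infinite (gsC q m)).mono fun _ => mem_GSsemigroup_of_gsC_le hm

theorem dvd_gsC (hm : m ≠ 0) : q ∣ gsC q m :=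
  Nat.dvd_sub (dvd_pow_self q hm) (dvd_pow_self q (by omega))

theorem gsC_succ (q m : ℕ) : gsC q (m + 1) = q * (q ^ m - q ^ (m / 2)) := by
  rw [gsC, show (m + 1 + 1) / 2 = m / 2 + 1 by omega, pow_succ', pow_succ', Nat.mul_sub]

theorem sub_add_gsG_succ (hq : 0 < q) (m : ℕ) :
    q ^ m - q ^ (m / 2) + gsG q (m + 1) = gsC q (m + 1) + gsG q m := by
  have hBC : q ^ m = q ^ ((m + 1) / 2) * q ^ (m / 2) := by rw [← pow_add]; congr 1; omega
  rw [gsC_succ, gsG, gsG, show (m + 1 + 1) / 2 = m / 2 + 1 by omega, pow_succ', hBC]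
  have hB := Nat.one_le_pow ((m + 1) / 2) q hq
  have hC := Nat.one_le_pow (m / 2) q hq
  generalize q ^ ((m + 1) / 2) = B at hB ⊢
  generalize q ^ (m / 2) = C at hC ⊢
  have hCB : C ≤ B * C := Nat.le_mul_of_pos_left C hB
  have hqC : 1 ≤ q * C := Nat.one_le_iff_ne_zero.2 (by positivity)
  zify [hB, hC, hCB, hqC, Nat.mul_le_mul_left q hCB]
  ring

-- Below `c_{m+2} = q·D`, the semigroup `Λ^{m+2}` is `q·(Λ^{m+1} ∩ [0, D))`.
open Classical in
theorem count_GSsemigroup_gsC_succ (hq : 0 < q) (m : ℕ) :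
    Nat.count (· ∈ GSsemigroup q (m + 2)) (gsC q (m + 2)) =
      Nat.count (· ∈ GSsemigroup q (m + 1)) (q ^ (m + 1) - q ^ ((m + 1) / 2)) := by
  rw [gsC_succ q (m + 1), ← Nat.count_mem_image_mul (GSsemigroup q (m + 1)) hq]
  refine le_antisymm (Nat.count_mono_left fun n hn hmem => ?_)
    (Nat.count_mono_left fun n _ hmem => .inl hmem)
  rw [GSsemigroup_add_two, gsC_succ q (m + 1)] at hmem
  exact hmem.resolve_right (not_le.2 hn)

open Classical in
theorem count_GSsemigroup_add_gsG (hq : 0 < q) (hm : m ≠ 0) {T : ℕ} (hT : gsC q m ≤ T) :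
    Nat.count (· ∈ GSsemigroup q m) T + gsG q m = T := by
  induction m generalizing T with
  | zero => exact absurd rfl hm
  | succ m ih =>
    rcases Nat.eq_zero_or_pos m with rfl | hm0
    · show Nat.count (· ∈ GSsemigroup q 1) T + gsG q 1 = T
      rw [Nat.count_of_forall (p := (· ∈ GSsemigroup q 1)) fun _ _ => trivial]
      simp [gsG]
    obtain ⟨k, rfl⟩ : ∃ k, m = k + 1 := ⟨m - 1, by omega⟩
    show Nat.count (· ∈ GSsemigroup q (k + 2)) T + gsG q (k + 2) = T
    replace hT : gsC q (k + 2) ≤ T := hT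
    have hstep := Nat.count_eq_add_sub_of_forall_le (p := (· ∈ GSsemigroup q (k + 2))) hT
      fun n hn => mem_GSsemigroup_of_gsC_le le_add_self hn
    have hD : gsC q (k + 1) ≤ q ^ (k + 1) - q ^ ((k + 1) / 2) :=
      Nat.sub_le_sub_left (Nat.pow_le_pow_right hq (by omega)) _
    have hih := ih (by omega) hD
    have hgenus : q ^ (k + 1) - q ^ ((k + 1) / 2) + gsG q (k + 2) = gsC q (k + 2) + gsG q (k + 1) :=
      sub_add_gsG_succ hq (k + 1)
    rw [count_GSsemigroup_gsC_succ hq] at hstep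
    omega

theorem gsEnum_of_gsC_le (hq : 0 < q) (hm : 2 ≤ m) {k : ℕ} (hk : gsC q m ≤ k + gsG q m) :
    gsEnum q m k = k + gsG q m := by
  classical
  have hcount := count_GSsemigroup_add_gsG hq (by omega) hk
  have := Nat.nth_count (p := (· ∈ GSsemigroup q m)) (mem_GSsemigroup_of_gsC_le hm hk)
  rwa [show Nat.count (· ∈ GSsemigroup q m) (k + gsG q m) = k by omega] at this

theorem gsNu_eq_ncard_semigroupDivisors (hm : 2 ≤ m) (i : ℕ) :
    gsNu q m i = (semigroupDivisors (GSsemigroup q m) (gsEnum q m i)).ncard :=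
  ncard_setOf_nth_add_mem (GSsemigroup_infinite hm) _

end GarciaStichtenoth

/-- for `c_m - g_m < i ≤ 2c_m - g_m - 2` with `q ∣ (i + 1 + g_m)`,
`ν^m_{i+1} ≥ ν^m_{i+2}`, and consequently `δ^m_i = ν^m_{i+2}`. -/
theorem stmt17 (q : ℕ) (hq : 2 ≤ q) (m : ℕ) (hm : 2 ≤ m) (i : ℕ)
    (h1 : gsC q m - gsG q m < i) (h2 : i ≤ 2 * gsC q m - gsG q m - 2)
    (h3 : q ∣ (i + 1 + gsG q m)) :
    gsNu q m (i + 2) ≤ gsNu q m (i + 1) ∧ gsDelta q m i = gsNu q m (i + 2) := by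
  have hc : q ∣ gsC q m := dvd_gsC (by omega)
  have hqx : ¬ q ∣ i + 2 + gsG q m := fun h => by
    have := Nat.le_of_dvd one_pos ((Nat.dvd_add_right h3).1 (by convert h using 1; ring))
    omega
  have hx : i + 2 + gsG q m < 2 * gsC q m :=
    lt_of_le_of_ne (by omega) fun h => hqx (h ▸ dvd_mul_of_dvd_right hc 2)
  have hν : ∀ J, i < J → gsNu q m (i + 2) ≤ gsNu q m J := fun J hJ => by
    rw [gsNu_eq_ncard_semigroupDivisors hm, gsNu_eq_ncard_semigroupDivisors hm,
      gsEnum_of_gsC_le (by omega) hm (by omega), gsEnum_of_gsC_le (by omega) hm (by omega)]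
    exact ncard_semigroupDivisors_le_of_not_dvd (fun _ => mem_GSsemigroup_of_gsC_le hm)
      (fun _ => dvd_of_mem_GSsemigroup_of_lt_gsC hm) hc hx hqx (by omega)
  refine ⟨hν _ (by omega), IsLeast.csInf_eq ⟨⟨i + 2, by simp, rfl⟩, ?_⟩⟩
  rintro _ ⟨J, hJ, rfl⟩
  exact hν J hJ
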